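/- arXiv:2503.06577 — 8 statements merged into one kernel-verified Lean document; each statement's English description precedes it below -/
import Mathlib

section
/- Let (B, Θ) be a category with a structure of nullhomotopies such that Θ satisfies the reduced interchange condition, B has a Θ-strong zero object, and B has strong Θ-kernels and strong Θ-cokernels. Then for every object Y of B, the object N(0_Y) (the Θ-kernel of the initial arrow 0_Y : 0 → Y) is discrete and the object C(0^Y) (the Θ-cokernel of the terminal arrow 0^Y : Y → 0) is codiscrete. In particular, π₀(Y) is discrete. -/
open CategoryTheory CategoryTheory.Limits

noncomputable section

universe v u

/-- A structure of nullhomotopies `Θ` on a category `B` (Grandis).  We encode the family of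
sets `Θ(g)`, for `g : X ⟶ Y`, as a total space `H X Y` together with a projection `ar`
assigning to every nullhomotopy the arrow on which it lives; thus `Θ(g) = {φ : H X Y // ar φ = g}`.
The maps `f ∘ - ∘ h : Θ(g) → Θ(f·g·h)` are encoded by `act`. -/
structure NullStruct (B : Type u) [Category.{v} B] where
  H : B → B → Type v
  ar : ∀ {X Y : B}, H X Y → (X ⟶ Y)
  act : ∀ {A X Y D : B}, (A ⟶ X) → H X Y → (Y ⟶ D) → H A D
  ar_act : ∀ {A X Y D : B} (f : A ⟶ X) (φ : H X Y) (h : Y ⟶ D),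
      ar (act f φ h) = f ≫ ar φ ≫ h
  act_id : ∀ {X Y : B} (φ : H X Y), act (𝟙 X) φ (𝟙 Y) = φ
  act_comp : ∀ {A' A X Y D D' : B} (f' : A' ⟶ A) (f : A ⟶ X) (φ : H X Y)
      (h : Y ⟶ D) (h' : D ⟶ D'),
      act (f' ≫ f) φ (h ≫ h') = act f' (act f φ h) h'

namespace NullStruct

variable {B : Type u} [Category.{v} B]

/-- The reduced interchange condition: `α ∘ g = f ∘ β` for `α ∈ Θ(f)`, `β ∈ Θ(g)`. -/
def ReducedInterchange (Θ : NullStruct B) : Prop :=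
  ∀ {A X Y : B} (f : A ⟶ X) (g : X ⟶ Y) (α : Θ.H A X) (β : Θ.H X Y),
    Θ.ar α = f → Θ.ar β = g → Θ.act (𝟙 A) α g = Θ.act f β (𝟙 Y)

/-- `(N, n, ν)` is a Θ-kernel of `g`. -/
structure IsKer (Θ : NullStruct B) {N X Y : B} (g : X ⟶ Y) (n : N ⟶ X) (ν : Θ.H N Y) : Prop where
  ar_eq : Θ.ar ν = n ≫ g
  lift : ∀ {A : B} (f : A ⟶ X) (φ : Θ.H A Y), Θ.ar φ = f ≫ g →
    ∃! f' : A ⟶ N, f' ≫ n = f ∧ Θ.act f' ν (𝟙 Y) = φ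

/-- `(N, n, ν)` is a strong Θ-kernel of `g`. -/
structure IsStrongKer (Θ : NullStruct B) {N X Y : B} (g : X ⟶ Y) (n : N ⟶ X) (ν : Θ.H N Y)
    extends NullStruct.IsKer Θ g n ν : Prop where
  liftH : ∀ {A : B} (f : A ⟶ N) (φ : Θ.H A X), Θ.ar φ = f ≫ n →
    Θ.act (𝟙 A) φ g = Θ.act f ν (𝟙 Y) →
    ∃! φ' : Θ.H A N, Θ.ar φ' = f ∧ Θ.act (𝟙 A) φ' n = φ

/-- `(Q, c, γ)` is a Θ-cokernel of `g`. -/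
structure IsCoker (Θ : NullStruct B) {X Y Q : B} (g : X ⟶ Y) (c : Y ⟶ Q) (γ : Θ.H X Q) : Prop where
  ar_eq : Θ.ar γ = g ≫ c
  desc : ∀ {D : B} (f : Y ⟶ D) (φ : Θ.H X D), Θ.ar φ = g ≫ f →
    ∃! f' : Q ⟶ D, c ≫ f' = f ∧ Θ.act (𝟙 X) γ f' = φ

/-- `(Q, c, γ)` is a strong Θ-cokernel of `g`. -/
structure IsStrongCoker (Θ : NullStruct B) {X Y Q : B} (g : X ⟶ Y) (c : Y ⟶ Q) (γ : Θ.H X Q)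
    extends NullStruct.IsCoker Θ g c γ : Prop where
  descH : ∀ {D : B} (f : Q ⟶ D) (φ : Θ.H Y D), Θ.ar φ = c ≫ f →
    Θ.act g φ (𝟙 D) = Θ.act (𝟙 X) γ f →
    ∃! φ' : Θ.H Q D, Θ.ar φ' = f ∧ Θ.act c φ' (𝟙 D) = φ

/-- A Θ-strong zero object: a zero object `Z` such that, for every `X`, the sets of
nullhomotopies `Θ(X ⟶ Z)` and `Θ(Z ⟶ X)` are singletons. -/
structure StrongZero (Θ : NullStruct B) where
  Z : B
  isZero : IsZero Z
  toZ : ∀ X : B, Θ.H X Z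
  toZ_uniq : ∀ (X : B) (φ : Θ.H X Z), φ = toZ X
  fromZ : ∀ X : B, Θ.H Z X
  fromZ_uniq : ∀ (X : B) (φ : Θ.H Z X), φ = fromZ X

/-- The zero arrow `X ⟶ Z ⟶ Y` through the Θ-strong zero object. -/
def StrongZero.zero {Θ : NullStruct B} (ζ : Θ.StrongZero) (X Y : B) : X ⟶ Y :=
  ζ.isZero.from_ X ≫ ζ.isZero.to_ Y

/-- The canonical nullhomotopy `*` on the zero arrow `X ⟶ Z ⟶ Y`. -/
def StrongZero.star {Θ : NullStruct B} (ζ : Θ.StrongZero) (X Y : B) : Θ.H X Y :=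
  Θ.act (𝟙 X) (ζ.toZ X) (ζ.isZero.to_ Y)

/-- An object `Y` is discrete: every nullhomotopy with codomain `Y` lives on the zero arrow
and is the canonical one (i.e. `Θ(g) = ∅` if `g ≠ 0`, and `Θ(0) = {*}`). -/
def IsDiscrete {Θ : NullStruct B} (ζ : Θ.StrongZero) (Y : B) : Prop :=
  ∀ (X : B) (φ : Θ.H X Y), Θ.ar φ = ζ.zero X Y ∧ φ = ζ.star X Y

/-- Codiscrete objects: dual of discrete. -/
def IsCodiscrete {Θ : NullStruct B} (ζ : Θ.StrongZero) (X : B) : Prop :=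
  ∀ (Y : B) (φ : Θ.H X Y), Θ.ar φ = ζ.zero X Y ∧ φ = ζ.star X Y

/-- `k` is a categorical kernel of `g` (with respect to the zero arrows through the
Θ-strong zero object). -/
def IsCatKer {Θ : NullStruct B} (ζ : Θ.StrongZero) {K X Y : B} (k : K ⟶ X) (g : X ⟶ Y) : Prop :=
  k ≫ g = ζ.zero K Y ∧
  ∀ {W : B} (w : W ⟶ X), w ≫ g = ζ.zero W Y → ∃! w' : W ⟶ K, w' ≫ k = w

/-- `(f, φ, g)` is S-exact: any factorization of `(f, φ)` through a Θ-kernel of `g`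
belongs to `S`. -/
def SExact (Θ : NullStruct B) (S : ∀ ⦃X Y : B⦄, (X ⟶ Y) → Prop)
    {W X Y : B} (f : W ⟶ X) (φ : Θ.H W Y) (g : X ⟶ Y) : Prop :=
  ∀ {N : B} (n : N ⟶ X) (ν : Θ.H N Y), Θ.IsKer g n ν →
    ∀ (w : W ⟶ N), w ≫ n = f → Θ.act w ν (𝟙 Y) = φ → S w

/-- `Y` is S-proper relative to the canonical arrow `η : Y ⟶ π₀(Y)`: the canonical
comparison `N(id_Y) ⟶ N(η_Y)` belongs to `S`. -/
def SProper (Θ : NullStruct B) (S : ∀ ⦃X Y : B⦄, (X ⟶ Y) → Prop)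
    {Y P : B} (η : Y ⟶ P) : Prop :=
  ∀ {NI : B} (nI : NI ⟶ Y) (νI : Θ.H NI Y), Θ.IsKer (𝟙 Y) nI νI →
  ∀ {NE : B} (nE : NE ⟶ Y) (νE : Θ.H NE P), Θ.IsKer η nE νE →
  ∀ (w : NI ⟶ NE), w ≫ nE = nI → Θ.act w νE (𝟙 P) = Θ.act (𝟙 NI) νI η → S w

/-- Condition (Sub) on a class `S` of arrows. -/
def CondSub {Θ : NullStruct B} (ζ : Θ.StrongZero) (S : ∀ ⦃X Y : B⦄, (X ⟶ Y) → Prop) : Prop :=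
  ∀ ⦃X Y X₀ Y₀ : B⦄ (g : X ⟶ Y) (g₀ : X₀ ⟶ Y₀) (x : X ⟶ X₀) (y : Y ⟶ Y₀),
    g ≫ y = x ≫ g₀ →
    ∀ ⦃Kg Kg₀ Kx Ky : B⦄ (kg : Kg ⟶ X) (kg₀ : Kg₀ ⟶ X₀) (kx : Kx ⟶ X) (ky : Ky ⟶ Y),
      IsCatKer ζ kg g → IsCatKer ζ kg₀ g₀ → IsCatKer ζ kx x → IsCatKer ζ ky y →
      ∀ (u : Kg ⟶ Kg₀) (v : Kx ⟶ Ky),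
        u ≫ kg₀ = kg ≫ x → v ≫ ky = kx ≫ g → S g → S u → S v

end NullStruct

open NullStruct

/-!
An arrow `f` into `N(0_Y)` is determined by `f ∘ ν`, since its composite with `n : N ⟶ 0` is
forced. For `φ ∈ Θ(f)`, reduced interchange gives `f ∘ ν = φ ∘ (n · 0_Y)`, a nullhomotopy
that factors through the Θ-strong zero object and hence equals `*`; as `0 ∘ ν = *` too,
`f = 0`. The strong kernel property then identifies `φ` with `*`, both being lifts of the
unique nullhomotopy into `0`. Codiscreteness of `C(0^Y)` is dual, and `π₀(Y)` is again the
Θ-kernel of an arrow out of `0`.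
-/

namespace NullStruct

variable {B : Type u} [Category.{v} B] {Θ : NullStruct B}

namespace StrongZero

variable (ζ : Θ.StrongZero)

theorem comp_eq_zero {X Y : B} (f : X ⟶ ζ.Z) (g : ζ.Z ⟶ Y) : f ≫ g = ζ.zero X Y := by
  rw [ζ.isZero.eq_of_tgt f (ζ.isZero.from_ X), ζ.isZero.eq_of_src g (ζ.isZero.to_ Y)]
  rfl

theorem ar_star (X Y : B) : Θ.ar (ζ.star X Y) = ζ.zero X Y := by
  rw [star, Θ.ar_act, Category.id_comp, comp_eq_zero]

theorem act_zero_right {A X M : B} (f : A ⟶ X) (α : Θ.H X M) (Y : B) :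
    Θ.act f α (ζ.zero M Y) = ζ.star A Y := by
  rw [zero, ← Category.id_comp f, Θ.act_comp, ζ.toZ_uniq A (Θ.act f α _)]
  rfl

theorem star_eq_act_fromZ (hRI : Θ.ReducedInterchange) (X Y : B) :
    ζ.star X Y = Θ.act (ζ.isZero.from_ X) (ζ.fromZ Y) (𝟙 Y) :=
  hRI _ _ _ _ (ζ.isZero.eq_of_tgt _ _) (ζ.isZero.eq_of_src _ _)

theorem act_zero_left (hRI : Θ.ReducedInterchange) (X : B) {M Y D : B} (β : Θ.H M Y)
    (h : Y ⟶ D) : Θ.act (ζ.zero X M) β h = ζ.star X D := by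
  rw [zero, ← Category.comp_id h, Θ.act_comp, ζ.fromZ_uniq D (Θ.act _ β h),
    ζ.star_eq_act_fromZ hRI]

end StrongZero

variable (ζ : Θ.StrongZero)

theorem act_ar_eq_star_of_ar_eq_zero (hRI : Θ.ReducedInterchange)
    {X N Y : B} (φ : Θ.H X N) (ν : Θ.H N Y)
    (hν : Θ.ar ν = ζ.zero N Y) : Θ.act (Θ.ar φ) ν (𝟙 Y) = ζ.star X Y :=
  (hRI _ _ φ ν rfl hν).symm.trans (ζ.act_zero_right (𝟙 X) φ Y)

theorem act_ar_eq_star_of_ar_eq_zero' (hRI : Θ.ReducedInterchange)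
    {Y Q D : B} (γ : Θ.H Y Q) (φ : Θ.H Q D)
    (hγ : Θ.ar γ = ζ.zero Y Q) : Θ.act (𝟙 Y) γ (Θ.ar φ) = ζ.star Y D :=
  (hRI _ _ γ φ hγ rfl).trans (ζ.act_zero_left hRI Y φ (𝟙 D))

theorem IsKer.eq_zero_of_act_eq_star (hRI : Θ.ReducedInterchange) {N Y : B} {g : ζ.Z ⟶ Y}
    {n : N ⟶ ζ.Z} {ν : Θ.H N Y} (hk : Θ.IsKer g n ν) {X : B} (f : X ⟶ N)
    (hf : Θ.act f ν (𝟙 Y) = ζ.star X Y) : f = ζ.zero X N := by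
  have hstar : Θ.ar (ζ.star X Y) = ζ.isZero.from_ X ≫ g := by
    rw [ζ.ar_star, ζ.comp_eq_zero]
  exact (hk.lift _ _ hstar).unique ⟨ζ.isZero.eq_of_tgt _ _, hf⟩
    ⟨ζ.isZero.eq_of_tgt _ _, ζ.act_zero_left hRI X ν (𝟙 Y)⟩

theorem IsCoker.eq_zero_of_act_eq_star {Y Q : B} {g : Y ⟶ ζ.Z} {c : ζ.Z ⟶ Q} {γ : Θ.H Y Q}
    (hc : Θ.IsCoker g c γ) {D : B} (f : Q ⟶ D) (hf : Θ.act (𝟙 Y) γ f = ζ.star Y D) :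
    f = ζ.zero Q D := by
  have hstar : Θ.ar (ζ.star Y D) = g ≫ ζ.isZero.to_ D := by
    rw [ζ.ar_star, ζ.comp_eq_zero]
  exact (hc.desc _ _ hstar).unique ⟨ζ.isZero.eq_of_src _ _, hf⟩
    ⟨ζ.isZero.eq_of_src _ _, ζ.act_zero_right (𝟙 Y) γ D⟩

theorem IsStrongKer.eq_star_of_ar_eq_zero (hRI : Θ.ReducedInterchange) {N Y : B}
    {g : ζ.Z ⟶ Y} {n : N ⟶ ζ.Z} {ν : Θ.H N Y} (hk : Θ.IsStrongKer g n ν) {X : B}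
    (φ : Θ.H X N) (hφ : Θ.ar φ = ζ.zero X N) :
    φ = ζ.star X N := by
  have hlift : Θ.act (𝟙 X) (ζ.toZ X) g = Θ.act (ζ.zero X N) ν (𝟙 Y) := by
    rw [ζ.act_zero_left hRI, ζ.isZero.eq_of_src g]
    rfl
  exact (hk.liftH _ _ (ζ.isZero.eq_of_tgt _ _) hlift).unique ⟨hφ, ζ.toZ_uniq X _⟩
    ⟨ζ.ar_star X N, ζ.toZ_uniq X _⟩

theorem IsStrongCoker.eq_star_of_ar_eq_zero (hRI : Θ.ReducedInterchange) {Y Q : B}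
    {g : Y ⟶ ζ.Z} {c : ζ.Z ⟶ Q} {γ : Θ.H Y Q} (hc : Θ.IsStrongCoker g c γ) {D : B}
    (φ : Θ.H Q D) (hφ : Θ.ar φ = ζ.zero Q D) :
    φ = ζ.star Q D := by
  have hdesc : Θ.act g (ζ.fromZ D) (𝟙 D) = Θ.act (𝟙 Y) γ (ζ.zero Q D) := by
    rw [ζ.act_zero_right, ζ.isZero.eq_of_tgt g, ζ.star_eq_act_fromZ hRI]
  exact (hc.descH _ _ (ζ.isZero.eq_of_src _ _) hdesc).unique ⟨hφ, ζ.fromZ_uniq D _⟩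
    ⟨ζ.ar_star Q D, ζ.fromZ_uniq D _⟩

theorem IsStrongKer.isDiscrete (hRI : Θ.ReducedInterchange) {N Y : B} {g : ζ.Z ⟶ Y}
    {n : N ⟶ ζ.Z} {ν : Θ.H N Y} (hk : Θ.IsStrongKer g n ν) : IsDiscrete ζ N := by
  intro X φ
  have hν : Θ.ar ν = ζ.zero N Y := hk.ar_eq.trans (ζ.comp_eq_zero n g)
  have hφ : Θ.ar φ = ζ.zero X N := hk.toIsKer.eq_zero_of_act_eq_star ζ hRI _
    (act_ar_eq_star_of_ar_eq_zero ζ hRI φ ν hν)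
  exact ⟨hφ, hk.eq_star_of_ar_eq_zero ζ hRI φ hφ⟩

theorem IsStrongCoker.isCodiscrete (hRI : Θ.ReducedInterchange) {Y Q : B} {g : Y ⟶ ζ.Z}
    {c : ζ.Z ⟶ Q} {γ : Θ.H Y Q} (hc : Θ.IsStrongCoker g c γ) : IsCodiscrete ζ Q := by
  intro D φ
  have hγ : Θ.ar γ = ζ.zero Y Q := hc.ar_eq.trans (ζ.comp_eq_zero g c)
  have hφ : Θ.ar φ = ζ.zero Q D := hc.toIsCoker.eq_zero_of_act_eq_star ζ _
    (act_ar_eq_star_of_ar_eq_zero' ζ hRI γ φ hγ)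
  exact ⟨hφ, hc.eq_star_of_ar_eq_zero ζ hRI φ hφ⟩

end NullStruct

theorem nker_initial_discrete_coker_terminal_codiscrete_general
    {B : Type u} [Category.{v} B] (Θ : NullStruct B)
    (hRI : Θ.ReducedInterchange) (ζ : Θ.StrongZero)
    (Y : B) :
    (∀ (N : B) (n : N ⟶ ζ.Z) (ν : Θ.H N Y),
        Θ.IsStrongKer (ζ.isZero.to_ Y) n ν → IsDiscrete ζ N) ∧
    (∀ (Q : B) (c : ζ.Z ⟶ Q) (γ : Θ.H Y Q),
        Θ.IsStrongCoker (ζ.isZero.from_ Y) c γ → IsCodiscrete ζ Q) ∧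
    (∀ (Q : B) (c : ζ.Z ⟶ Q) (γ : Θ.H Y Q),
        Θ.IsStrongCoker (ζ.isZero.from_ Y) c γ →
        ∀ (P : B) (p : P ⟶ ζ.Z) (μ : Θ.H P Q),
          Θ.IsStrongKer c p μ → IsDiscrete ζ P) :=
  ⟨fun _ _ _ hk => hk.isDiscrete ζ hRI,
    fun _ _ _ hc => hc.isCodiscrete ζ hRI,
    fun _ _ _ _ _ _ _ hk => hk.isDiscrete ζ hRI⟩

/-- Lemma: discreteness of `N(0_Y)`, codiscreteness of `C(0^Y)`.
Let `(B, Θ)` be a category with nullhomotopies such that `Θ` satisfies the reduced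
interchange condition, `B` has a Θ-strong zero object `ζ`, strong Θ-kernels and strong
Θ-cokernels.  Then for every object `Y`: any strong Θ-kernel `N(0_Y)` of the initial arrow
`0_Y : Z ⟶ Y` is discrete, any strong Θ-cokernel `C(0^Y)` of the terminal arrow
`0^Y : Y ⟶ Z` is codiscrete, and in particular `π₀(Y) = N(c_{0^Y})` is discrete. -/
theorem nker_initial_discrete_coker_terminal_codiscrete
    {B : Type u} [Category.{v} B] (Θ : NullStruct B)
    (hRI : Θ.ReducedInterchange) (ζ : Θ.StrongZero)
    (hK : ∀ (X Y : B) (g : X ⟶ Y), ∃ (N : B) (n : N ⟶ X) (ν : Θ.H N Y), Θ.IsStrongKer g n ν)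
    (hC : ∀ (X Y : B) (g : X ⟶ Y), ∃ (Q : B) (c : Y ⟶ Q) (γ : Θ.H X Q), Θ.IsStrongCoker g c γ)
    (Y : B) :
    (∀ (N : B) (n : N ⟶ ζ.Z) (ν : Θ.H N Y),
        Θ.IsStrongKer (ζ.isZero.to_ Y) n ν → IsDiscrete ζ N) ∧
    (∀ (Q : B) (c : ζ.Z ⟶ Q) (γ : Θ.H Y Q),
        Θ.IsStrongCoker (ζ.isZero.from_ Y) c γ → IsCodiscrete ζ Q) ∧
    (∀ (Q : B) (c : ζ.Z ⟶ Q) (γ : Θ.H Y Q),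
        Θ.IsStrongCoker (ζ.isZero.from_ Y) c γ →
        ∀ (P : B) (p : P ⟶ ζ.Z) (μ : Θ.H P Q),
          Θ.IsStrongKer c p μ → IsDiscrete ζ P) :=
  nker_initial_discrete_coker_terminal_codiscrete_general Θ hRI ζ Y
end
end

section
/- Let (B, Θ) be a category with a structure of nullhomotopies such that Θ satisfies the reduced interchange condition, B has a Θ-strong zero object, and B has Θ-kernels. If an object Y of B is discrete, then for every arrow g : X → Y the Θ-kernel of g is a categorical kernel of g; conversely, the categorical kernel k_g : Ker(g) → X of g, equipped with the canonical nullhomotopy * ∈ Θ(k_g·g), is a Θ-kernel of g. -/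
open CategoryTheory CategoryTheory.Limits

noncomputable section

universe v u

open NullStruct

namespace NullStruct

variable {B : Type u} [Category.{v} B] {Θ : NullStruct B} {ζ : Θ.StrongZero} {Y : B}

theorem IsDiscrete.ar_eq (hY : IsDiscrete ζ Y) {X : B} (φ : Θ.H X Y) :
    Θ.ar φ = ζ.zero X Y :=
  (hY X φ).1

theorem IsDiscrete.eq (hY : IsDiscrete ζ Y) {X : B} (φ ψ : Θ.H X Y) : φ = ψ :=
  (hY X φ).2.trans (hY X ψ).2.symm

/-- The nullhomotopy half of the Θ-kernel property is automatic over a discrete object. -/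
theorem IsDiscrete.isKer_iff_isCatKer (hY : IsDiscrete ζ Y) {N X : B} {g : X ⟶ Y}
    {n : N ⟶ X} (ν : Θ.H N Y) : Θ.IsKer g n ν ↔ IsCatKer ζ n g := by
  constructor
  · intro hker
    refine ⟨hker.ar_eq ▸ hY.ar_eq ν, fun w hw => ?_⟩
    obtain ⟨w', ⟨hw', -⟩, huniq⟩ := hker.lift w (ζ.star _ Y) (by rw [hY.ar_eq, hw])
    exact ⟨w', hw', fun y hy => huniq y ⟨hy, hY.eq _ _⟩⟩
  · rintro ⟨hzero, hlift⟩
    refine ⟨by rw [hY.ar_eq, hzero], fun f φ hφ => ?_⟩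
    obtain ⟨f', hf', huniq⟩ := hlift f (hφ ▸ hY.ar_eq φ)
    exact ⟨f', ⟨hf', hY.eq _ _⟩, fun y hy => huniq y hy.1⟩

end NullStruct

theorem theta_kernel_eq_categorical_kernel_of_discrete_general
    {B : Type u} [Category.{v} B] (Θ : NullStruct B)
    (ζ : Θ.StrongZero)
    (Y : B) (hY : IsDiscrete ζ Y) :
    (∀ (X N : B) (g : X ⟶ Y) (n : N ⟶ X) (ν : Θ.H N Y),
        Θ.IsKer g n ν → IsCatKer ζ n g) ∧
    (∀ (X K : B) (g : X ⟶ Y) (k : K ⟶ X),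
        IsCatKer ζ k g → Θ.IsKer g k (ζ.star K Y)) :=
  ⟨fun _ _ _ _ ν => (hY.isKer_iff_isCatKer ν).1,
    fun _ _ _ _ => (hY.isKer_iff_isCatKer _).2⟩

/-- Lemma: Θ-kernels over a discrete object are categorical kernels.
Let `(B, Θ)` be a category with nullhomotopies satisfying the reduced interchange
condition, with a Θ-strong zero object `ζ` and Θ-kernels.  If `Y` is discrete then, for
every `g : X ⟶ Y`, any Θ-kernel of `g` is a categorical kernel of `g`, and conversely any
categorical kernel of `g`, equipped with the canonical nullhomotopy `*`, is a Θ-kernel. -/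
theorem theta_kernel_eq_categorical_kernel_of_discrete
    {B : Type u} [Category.{v} B] (Θ : NullStruct B)
    (hRI : Θ.ReducedInterchange) (ζ : Θ.StrongZero)
    (hK : ∀ (X Y : B) (g : X ⟶ Y), ∃ (N : B) (n : N ⟶ X) (ν : Θ.H N Y), Θ.IsKer g n ν)
    (Y : B) (hY : IsDiscrete ζ Y) :
    (∀ (X N : B) (g : X ⟶ Y) (n : N ⟶ X) (ν : Θ.H N Y),
        Θ.IsKer g n ν → IsCatKer ζ n g) ∧
    (∀ (X K : B) (g : X ⟶ Y) (k : K ⟶ X),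
        IsCatKer ζ k g → Θ.IsKer g k (ζ.star K Y)) :=
  theta_kernel_eq_categorical_kernel_of_discrete_general Θ ζ Y hY
end
end

section
/- Let (B, Θ) be a category with a structure of nullhomotopies satisfying the reduced interchange condition. Given arrows a : A → X, b : B → Y, g : X → Y, g' : A → B with a·g = g'·b, Θ-kernels (N(a), n_a, ν_a) of a and (N(b), n_b, ν_b) of b with the Θ-kernel of b strong, and the induced arrow n(g,g') : N(a) → N(b) (the unique arrow with n(g,g')·n_b = n_a·g' and n(g,g') ∘ ν_b = ν_a ∘ g), then for any nullhotopies φ ∈ Θ(g) and ψ ∈ Θ(n_a) there exists a unique nullhomotopy n(ψ) ∈ Θ(n(g,g')) such that n(ψ) ∘ n_b = ψ ∘ g'. -/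
open CategoryTheory CategoryTheory.Limits

noncomputable section

universe v u

open NullStruct

namespace NullStruct

variable {B : Type u} [Category.{v} B] (Θ : NullStruct B)

theorem ar_act_id {X Y Z : B} (ψ : Θ.H X Y) (h : Y ⟶ Z) :
    Θ.ar (Θ.act (𝟙 X) ψ h) = Θ.ar ψ ≫ h := by
  rw [Θ.ar_act, Category.id_comp]

theorem act_id_comp {X Y Z W : B} (ψ : Θ.H X Y) (h : Y ⟶ Z) (h' : Z ⟶ W) :
    Θ.act (𝟙 X) ψ (h ≫ h') = Θ.act (𝟙 X) (Θ.act (𝟙 X) ψ h) h' := by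
  simpa using Θ.act_comp (𝟙 X) (𝟙 X) ψ h h'

variable {Θ}

theorem ReducedInterchange.act_id_congr (hRI : Θ.ReducedInterchange) {A X Y : B}
    {α α' : Θ.H A X} (hα : Θ.ar α = Θ.ar α') (β : Θ.H X Y) :
    Θ.act (𝟙 A) α (Θ.ar β) = Θ.act (𝟙 A) α' (Θ.ar β) :=
  (hRI _ _ α β rfl rfl).trans (hRI _ _ α' β hα.symm rfl).symm

end NullStruct

/-- Lemma: functoriality of Θ-kernels, part 2: induced nullhomotopy.
Assume `Θ` satisfies the reduced interchange condition.  Given a commutative square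
`a ≫ g = g' ≫ b`, Θ-kernels of `a` and `b` with the Θ-kernel of `b` strong, and the
induced arrow `m = n(g,g')` (the unique arrow with `m ≫ n_b = n_a ≫ g'` and
`m ∘ ν_b = ν_a ∘ g`), then for any nullhomotopies `φ ∈ Θ(g)` and `ψ ∈ Θ(n_a)` there is a
unique nullhomotopy `n(ψ) ∈ Θ(n(g,g'))` with `n(ψ) ∘ n_b = ψ ∘ g'`. -/
theorem theta_kernel_functoriality_nullhomotopy
    {B : Type u} [Category.{v} B] (Θ : NullStruct B) (hRI : Θ.ReducedInterchange)
    {A X Bo Y : B} (a : A ⟶ X) (b : Bo ⟶ Y) (g : X ⟶ Y) (g' : A ⟶ Bo)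
    (hsq : a ≫ g = g' ≫ b)
    {Na : B} (na : Na ⟶ A) (νa : Θ.H Na X) (hka : Θ.IsKer a na νa)
    {Nb : B} (nb : Nb ⟶ Bo) (νb : Θ.H Nb Y) (hkb : Θ.IsStrongKer b nb νb)
    (m : Na ⟶ Nb) (hm₁ : m ≫ nb = na ≫ g')
    (hm₂ : Θ.act m νb (𝟙 Y) = Θ.act (𝟙 Na) νa g)
    (φ : Θ.H X Y) (hφ : Θ.ar φ = g) (ψ : Θ.H Na A) (hψ : Θ.ar ψ = na) :
    ∃! χ : Θ.H Na Nb, Θ.ar χ = m ∧ Θ.act (𝟙 Na) χ nb = Θ.act (𝟙 Na) ψ g' := by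
  have hcompat : Θ.act (𝟙 Na) (Θ.act (𝟙 Na) ψ g') b = Θ.act m νb (𝟙 Y) :=
    calc Θ.act (𝟙 Na) (Θ.act (𝟙 Na) ψ g') b
        = Θ.act (𝟙 Na) (Θ.act (𝟙 Na) ψ a) g := by rw [← Θ.act_id_comp, ← Θ.act_id_comp, hsq]
      _ = Θ.act (𝟙 Na) νa g := by
          rw [← hφ]; exact hRI.act_id_congr (by rw [Θ.ar_act_id, hψ, hka.ar_eq]) φ
      _ = Θ.act m νb (𝟙 Y) := hm₂.symm
  exact hkb.liftH m _ (by rw [Θ.ar_act_id, hψ, hm₁]) hcompat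
end
end

section
/- Let (B, Θ) be a category with a structure of nullhomotopies satisfying the reduced interchange condition, with a Θ-strong zero object, strong Θ-kernels of all arrows, and strong Θ-cokernels of all terminal arrows. For every arrow g : X → Y with Θ-kernel (N(g), n_g, ν_g), each pair of consecutive arrows in the snail sequence N(0_{N(g)}) →^{n(n_g)} N(0_X) →^{n(g)} N(0_Y) →^{δ} π₀(N(g)) →^{π₀(n_g)} π₀(X) →^{π₀(g)} π₀(Y) composes to the zero arrow. -/
/-!
An arrow `w` into the Θ-kernel `(K, k, κ)` of an arrow out of the zero object is determined by
the nullhomotopy `w ∘ κ`, and `w = 0` as soon as `w ∘ κ` factors through the zero object,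
since nullhomotopies out of or into a Θ-strong zero object are unique. Every arrow of the snail
sequence lands in such a kernel, and for each consecutive composite the factorization follows
by pasting the defining equations of the two arrows and applying reduced interchange
`φ ∘ ar ψ = ar φ ∘ ψ`. For `n(g) · δ` and `π₀(n_g) · π₀(g)` one first shows, using the strong
Θ-kernel of `g` resp. the strong Θ-cokernel of `0^{N(g)}`, that `n(g) · Δ` resp. `c(n_g) · c(g)`
carries a nullhomotopy; and `η` kills arrows carrying a nullhomotopy.
-/


open CategoryTheory CategoryTheory.Limits

noncomputable section

universe v u

open NullStruct

namespace NullStruct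

variable {B : Type u} [Category.{v} B] {Θ : NullStruct B}

lemma act_act {A' A X Y D D' : B} (f' : A' ⟶ A) (f : A ⟶ X) (φ : Θ.H X Y)
    (h : Y ⟶ D) (h' : D ⟶ D') :
    Θ.act f' (Θ.act f φ h) h' = Θ.act (f' ≫ f) φ (h ≫ h') :=
  (Θ.act_comp f' f φ h h').symm

lemma act_comp_left {A' A X Y D : B} (f' : A' ⟶ A) (f : A ⟶ X) (φ : Θ.H X Y) (h : Y ⟶ D) :
    Θ.act (f' ≫ f) φ h = Θ.act f' (Θ.act f φ (𝟙 Y)) h := by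
  rw [act_act, Category.id_comp]

lemma act_comp_right {A X Y D D' : B} (f : A ⟶ X) (φ : Θ.H X Y) (h : Y ⟶ D) (h' : D ⟶ D') :
    Θ.act f φ (h ≫ h') = Θ.act (𝟙 A) (Θ.act f φ h) h' := by
  rw [act_act, Category.id_comp]

lemma act_paste {A₁ A₂ A₃ B₁ B₂ B₃ : B} {φ₁ : Θ.H A₁ B₁} {φ₂ : Θ.H A₂ B₂} {φ₃ : Θ.H A₃ B₃}
    {a : A₁ ⟶ A₂} {a' : A₂ ⟶ A₃} {b : B₁ ⟶ B₂} {b' : B₂ ⟶ B₃}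
    (h : Θ.act a φ₂ (𝟙 B₂) = Θ.act (𝟙 A₁) φ₁ b)
    (h' : Θ.act a' φ₃ (𝟙 B₃) = Θ.act (𝟙 A₂) φ₂ b') :
    Θ.act (a ≫ a') φ₃ (𝟙 B₃) = Θ.act (𝟙 A₁) φ₁ (b ≫ b') :=
  calc Θ.act (a ≫ a') φ₃ (𝟙 B₃)
      = Θ.act (𝟙 A₁) (Θ.act a φ₂ (𝟙 B₂)) b' := by
        rw [act_comp_left, h', act_act, act_act]
        simp only [Category.id_comp, Category.comp_id]
    _ = Θ.act (𝟙 A₁) φ₁ (b ≫ b') := by rw [h, act_act, Category.id_comp]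

lemma ReducedInterchange.act_ar (hRI : Θ.ReducedInterchange) {A X Y : B}
    (α : Θ.H A X) (β : Θ.H X Y) :
    Θ.act (𝟙 A) α (Θ.ar β) = Θ.act (Θ.ar α) β (𝟙 Y) :=
  hRI _ _ α β rfl rfl

lemma ReducedInterchange.act_cross (hRI : Θ.ReducedInterchange) {A Z C : B} (hZ : IsZero Z)
    (α : Θ.H A Z) (β : Θ.H Z C) (a : A ⟶ Z) (b : Z ⟶ C) :
    Θ.act (𝟙 A) α b = Θ.act a β (𝟙 C) :=
  hRI a b α β (hZ.eq_of_tgt _ _) (hZ.eq_of_src _ _)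

lemma StrongZero.act_zero (ζ : Θ.StrongZero) {A K W : B} (ν : Θ.H K W) (a : A ⟶ ζ.Z)
    (μ : Θ.H ζ.Z W) :
    Θ.act (ζ.zero A K) ν (𝟙 W) = Θ.act a μ (𝟙 W) := by
  rw [StrongZero.zero, act_comp_left, ζ.fromZ_uniq _ (Θ.act _ ν _), ← ζ.fromZ_uniq _ μ,
    ζ.isZero.eq_of_tgt (ζ.isZero.from_ A) a]

lemma IsKer.hom_ext {N X Y A : B} {g : X ⟶ Y} {n : N ⟶ X} {ν : Θ.H N Y} (hk : Θ.IsKer g n ν)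
    {w₁ w₂ : A ⟶ N} (hn : w₁ ≫ n = w₂ ≫ n)
    (hν : Θ.act w₁ ν (𝟙 Y) = Θ.act w₂ ν (𝟙 Y)) : w₁ = w₂ := by
  obtain ⟨w, -, huniq⟩ := hk.lift (w₁ ≫ n) (Θ.act w₁ ν (𝟙 Y))
    (by rw [Θ.ar_act, hk.ar_eq, Category.comp_id, Category.assoc])
  rw [huniq w₁ ⟨rfl, rfl⟩, huniq w₂ ⟨hn.symm, hν.symm⟩]

lemma IsKer.eq_zero_of_act_eq (ζ : Θ.StrongZero) {N W A : B} {g : ζ.Z ⟶ W} {n : N ⟶ ζ.Z}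
    {ν : Θ.H N W} (hk : Θ.IsKer g n ν) {w : A ⟶ N} (a : A ⟶ ζ.Z) (μ : Θ.H ζ.Z W)
    (h : Θ.act w ν (𝟙 W) = Θ.act a μ (𝟙 W)) : w = ζ.zero A N :=
  hk.hom_ext (ζ.isZero.eq_of_tgt _ _) (h.trans (ζ.act_zero ν a μ).symm)

/-- By interchange `φ₁ ∘ (b ≫ b') = ar φ₁ ∘ β`, which factors through zero. -/
lemma paste_comp_eq_zero (hRI : Θ.ReducedInterchange) (ζ : Θ.StrongZero)
    {A₁ A₂ A₃ B₁ B₂ B₃ : B} {φ₁ : Θ.H A₁ B₁} {φ₂ : Θ.H A₂ B₂} {φ₃ : Θ.H A₃ B₃}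
    {c : ζ.Z ⟶ B₃} {k₃ : A₃ ⟶ ζ.Z} (hk₃ : Θ.IsKer c k₃ φ₃)
    {k₁ : A₁ ⟶ ζ.Z} {t₁ : ζ.Z ⟶ B₁} (hφ₁ : Θ.ar φ₁ = k₁ ≫ t₁)
    {a : A₁ ⟶ A₂} {a' : A₂ ⟶ A₃} {b : B₁ ⟶ B₂} {b' : B₂ ⟶ B₃}
    {β : Θ.H B₁ B₃} (hβ : Θ.ar β = b ≫ b')
    (h : Θ.act a φ₂ (𝟙 B₂) = Θ.act (𝟙 A₁) φ₁ b)
    (h' : Θ.act a' φ₃ (𝟙 B₃) = Θ.act (𝟙 A₂) φ₂ b') :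
    a ≫ a' = ζ.zero A₁ A₃ := by
  refine hk₃.eq_zero_of_act_eq ζ k₁ (Θ.act t₁ β (𝟙 B₃)) ?_
  rw [act_paste h h', ← hβ, hRI.act_ar, hφ₁, act_comp_left]

/-- `η : N ⟶ π₀ N` kills every null arrow. -/
lemma comp_eta_eq_zero_of_null (hRI : Θ.ReducedInterchange) (ζ : Θ.StrongZero)
    {A N C P : B} {c : ζ.Z ⟶ C} {γ : Θ.H N C} (hγ : Θ.ar γ = ζ.isZero.from_ N ≫ c)
    {p : P ⟶ ζ.Z} {μ : Θ.H P C} (hp : Θ.IsKer c p μ) {η : N ⟶ P} (hη : Θ.act η μ (𝟙 C) = γ)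
    (α : Θ.H A N) :
    Θ.ar α ≫ η = ζ.zero A P := by
  refine hp.eq_zero_of_act_eq ζ (ζ.isZero.from_ A) (ζ.fromZ C) ?_
  rw [act_comp_left, hη, ← hRI.act_ar, hγ, act_comp_right,
    hRI.act_cross ζ.isZero _ (ζ.fromZ C) (ζ.isZero.from_ A) c]

lemma comp_eq_zero_of_act_eq (ζ : Θ.StrongZero) {K N P X W : B} {c : ζ.Z ⟶ W}
    {p : P ⟶ ζ.Z} {μ : Θ.H P W} (hp : Θ.IsKer c p μ) {γ : Θ.H X W} {u : N ⟶ P} {n : N ⟶ X}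
    (h : Θ.act u μ (𝟙 W) = Θ.act n γ (𝟙 W)) {d : K ⟶ N} (hd : d ≫ n = ζ.zero K X) :
    d ≫ u = ζ.zero K P := by
  refine hp.eq_zero_of_act_eq ζ (ζ.isZero.from_ K) (Θ.act (ζ.isZero.to_ X) γ (𝟙 W)) ?_
  rw [act_comp_left, h, act_act, Category.comp_id, hd, StrongZero.zero, act_comp_left]

/-- The arrow `c(n_g) ≫ c(g)` induced on the Θ-cokernels of the terminal arrows is null. -/
lemma exists_ar_eq_comp_of_paste (hRI : Θ.ReducedInterchange) (ζ : Θ.StrongZero)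
    {N X Y CN CX CY : B} {cN : ζ.Z ⟶ CN} {γN : Θ.H N CN}
    (hcN : Θ.IsStrongCoker (ζ.isZero.from_ N) cN γN) {γX : Θ.H X CX}
    {cY : ζ.Z ⟶ CY} {γY : Θ.H Y CY} (hγY : Θ.ar γY = ζ.isZero.from_ Y ≫ cY)
    {n : N ⟶ X} {g : X ⟶ Y} {ν : Θ.H N Y} (hν : Θ.ar ν = n ≫ g)
    {u : CN ⟶ CX} {v : CX ⟶ CY}
    (hu : Θ.act n γX (𝟙 CX) = Θ.act (𝟙 N) γN u)
    (hv : Θ.act g γY (𝟙 CY) = Θ.act (𝟙 X) γX v) :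
    ∃ β : Θ.H CN CY, Θ.ar β = u ≫ v := by
  have hnull : Θ.act (ζ.isZero.from_ N) (ζ.fromZ CY) (𝟙 CY) = Θ.act (𝟙 N) γN (u ≫ v) := by
    rw [← act_paste hu hv, ← hν, ← hRI.act_ar, hγY, act_comp_right,
      hRI.act_cross ζ.isZero _ (ζ.fromZ CY) (ζ.isZero.from_ N) cY]
  obtain ⟨β, ⟨hβ, -⟩, -⟩ := hcN.descH (u ≫ v) (ζ.fromZ CY) (ζ.isZero.eq_of_src _ _) hnull
  exact ⟨β, hβ⟩

end NullStruct

theorem snail_sequence_composites_zero_general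
    {B : Type u} [Category.{v} B] (Θ : NullStruct B)
    (hRI : Θ.ReducedInterchange) (ζ : Θ.StrongZero)
    -- the arrow `g` and its strong Θ-kernel
    {X Y : B} (g : X ⟶ Y)
    {Ng : B} (ng : Ng ⟶ X) (νg : Θ.H Ng Y) (hg : Θ.IsStrongKer g ng νg)
    -- strong Θ-kernels of the initial arrows of `N(g)`, `X`, `Y`
    {KN : B} (kN : KN ⟶ ζ.Z) (νN : Θ.H KN Ng) (hkN : Θ.IsStrongKer (ζ.isZero.to_ Ng) kN νN)
    {KX : B} (kX : KX ⟶ ζ.Z) (νX : Θ.H KX X) (hkX : Θ.IsStrongKer (ζ.isZero.to_ X) kX νX)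
    {KY : B} (kY : KY ⟶ ζ.Z) (νY : Θ.H KY Y) (hkY : Θ.IsStrongKer (ζ.isZero.to_ Y) kY νY)
    -- `π₀`-data of `N(g)`
    {CN : B} (cN : ζ.Z ⟶ CN) (γN : Θ.H Ng CN)
    (hcN : Θ.IsStrongCoker (ζ.isZero.from_ Ng) cN γN)
    {PN : B} (pN : PN ⟶ ζ.Z) (μN : Θ.H PN CN) (hpN : Θ.IsStrongKer cN pN μN)
    (ηN : Ng ⟶ PN) (hηN : Θ.act ηN μN (𝟙 CN) = γN)
    -- `π₀`-data of `X`
    {CX : B} (cX : ζ.Z ⟶ CX) (γX : Θ.H X CX)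
    {PX : B} (pX : PX ⟶ ζ.Z) (μX : Θ.H PX CX) (hpX : Θ.IsStrongKer cX pX μX)
    -- `π₀`-data of `Y`
    {CY : B} (cY : ζ.Z ⟶ CY) (γY : Θ.H Y CY)
    (hcY : Θ.IsStrongCoker (ζ.isZero.from_ Y) cY γY)
    {PY : B} (pY : PY ⟶ ζ.Z) (μY : Θ.H PY CY) (hpY : Θ.IsStrongKer cY pY μY)
    -- the arrows of the snail sequence
    (nng : KN ⟶ KX)
    (hnng : Θ.act nng νX (𝟙 X) = Θ.act (𝟙 KN) νN ng)
    (nmg : KX ⟶ KY)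
    (hnmg : Θ.act nmg νY (𝟙 Y) = Θ.act (𝟙 KX) νX g)
    (Δ : KY ⟶ Ng) (hΔ₀ : Δ ≫ ng = ζ.zero KY X) (hΔ : Θ.act Δ νg (𝟙 Y) = νY)
    (cng : CN ⟶ CX)
    (hcng : Θ.act (𝟙 Ng) γN cng = Θ.act ng γX (𝟙 CX))
    (png : PN ⟶ PX)
    (hpng : Θ.act png μX (𝟙 CX) = Θ.act (𝟙 PN) μN cng)
    (cg : CX ⟶ CY)
    (hcg : Θ.act (𝟙 X) γX cg = Θ.act g γY (𝟙 CY))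
    (pg : PX ⟶ PY)
    (hpg : Θ.act pg μY (𝟙 CY) = Θ.act (𝟙 PX) μX cg) :
    nng ≫ nmg = ζ.zero KN KY ∧
    nmg ≫ Δ ≫ ηN = ζ.zero KX PN ∧
    (Δ ≫ ηN) ≫ png = ζ.zero KY PX ∧
    png ≫ pg = ζ.zero PN PY := by
  have hηN' : Θ.act ηN μN (𝟙 CN) = Θ.act (𝟙 Ng) γN (𝟙 CN) := by rw [hηN, Θ.act_id]
  refine ⟨paste_comp_eq_zero hRI ζ hkY.toIsKer hkN.ar_eq hg.ar_eq hnng hnmg, ?_, ?_, ?_⟩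
  · obtain ⟨α, ⟨hα, -⟩, -⟩ := hg.liftH (nmg ≫ Δ) νX
      (by rw [hkX.ar_eq, Category.assoc, hΔ₀, StrongZero.zero, ← Category.assoc]
          exact ζ.isZero.eq_of_tgt _ _ =≫ _)
      (by rw [← hnmg, ← hΔ, act_act, Category.comp_id])
    rw [← Category.assoc, ← hα]
    exact comp_eta_eq_zero_of_null hRI ζ hcN.ar_eq hpN.toIsKer hηN α
  · rw [Category.assoc]
    exact comp_eq_zero_of_act_eq ζ hpX.toIsKer
      ((act_paste hηN' hpng).trans (by rw [Category.id_comp, hcng])) hΔ₀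
  · obtain ⟨β, hβ⟩ := exists_ar_eq_comp_of_paste hRI ζ hcN hcY.ar_eq hg.ar_eq hcng.symm hcg.symm
    exact paste_comp_eq_zero hRI ζ hpY.toIsKer hpN.ar_eq hβ hpng hpg

/-- The homotopy snail sequence: consecutive composites are zero.
Let `(B, Θ)` satisfy the reduced interchange condition, with a Θ-strong zero object `ζ`,
strong Θ-kernels of all arrows and strong Θ-cokernels of all terminal arrows.  For an
arrow `g : X ⟶ Y` with strong Θ-kernel `(N(g), n_g, ν_g)`, given the Θ-kernels of the
initial arrows of `N(g)`, `X`, `Y`, the `π₀`-data of `N(g)`, `X`, `Y` (Θ-cokernel of the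
terminal arrow followed by the Θ-kernel of its arrow part, with canonical arrow `η`), and
the arrows `n(n_g)`, `n(g)`, `Δ` (hence `δ = Δ ≫ η`), `c(n_g)`, `π₀(n_g)`, `c(g)`,
`π₀(g)` characterized by their universal equations, each pair of consecutive arrows of the
snail sequence
`N(0_{N(g)}) ⟶ N(0_X) ⟶ N(0_Y) ⟶ π₀(N(g)) ⟶ π₀(X) ⟶ π₀(Y)`
composes to the zero arrow. -/
theorem snail_sequence_composites_zero
    {B : Type u} [Category.{v} B] (Θ : NullStruct B)
    (hRI : Θ.ReducedInterchange) (ζ : Θ.StrongZero)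
    (hK : ∀ (X Y : B) (g : X ⟶ Y), ∃ (N : B) (n : N ⟶ X) (ν : Θ.H N Y), Θ.IsStrongKer g n ν)
    (hC : ∀ (Y : B), ∃ (Q : B) (c : ζ.Z ⟶ Q) (γ : Θ.H Y Q),
        Θ.IsStrongCoker (ζ.isZero.from_ Y) c γ)
    -- the arrow `g` and its strong Θ-kernel
    {X Y : B} (g : X ⟶ Y)
    {Ng : B} (ng : Ng ⟶ X) (νg : Θ.H Ng Y) (hg : Θ.IsStrongKer g ng νg)
    -- strong Θ-kernels of the initial arrows of `N(g)`, `X`, `Y`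
    {KN : B} (kN : KN ⟶ ζ.Z) (νN : Θ.H KN Ng) (hkN : Θ.IsStrongKer (ζ.isZero.to_ Ng) kN νN)
    {KX : B} (kX : KX ⟶ ζ.Z) (νX : Θ.H KX X) (hkX : Θ.IsStrongKer (ζ.isZero.to_ X) kX νX)
    {KY : B} (kY : KY ⟶ ζ.Z) (νY : Θ.H KY Y) (hkY : Θ.IsStrongKer (ζ.isZero.to_ Y) kY νY)
    -- `π₀`-data of `N(g)`
    {CN : B} (cN : ζ.Z ⟶ CN) (γN : Θ.H Ng CN)
    (hcN : Θ.IsStrongCoker (ζ.isZero.from_ Ng) cN γN)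
    {PN : B} (pN : PN ⟶ ζ.Z) (μN : Θ.H PN CN) (hpN : Θ.IsStrongKer cN pN μN)
    (ηN : Ng ⟶ PN) (hηN : Θ.act ηN μN (𝟙 CN) = γN)
    -- `π₀`-data of `X`
    {CX : B} (cX : ζ.Z ⟶ CX) (γX : Θ.H X CX)
    (hcX : Θ.IsStrongCoker (ζ.isZero.from_ X) cX γX)
    {PX : B} (pX : PX ⟶ ζ.Z) (μX : Θ.H PX CX) (hpX : Θ.IsStrongKer cX pX μX)
    (ηX : X ⟶ PX) (hηX : Θ.act ηX μX (𝟙 CX) = γX)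
    -- `π₀`-data of `Y`
    {CY : B} (cY : ζ.Z ⟶ CY) (γY : Θ.H Y CY)
    (hcY : Θ.IsStrongCoker (ζ.isZero.from_ Y) cY γY)
    {PY : B} (pY : PY ⟶ ζ.Z) (μY : Θ.H PY CY) (hpY : Θ.IsStrongKer cY pY μY)
    (ηY : Y ⟶ PY) (hηY : Θ.act ηY μY (𝟙 CY) = γY)
    -- the arrows of the snail sequence
    (nng : KN ⟶ KX) (hnng₀ : nng ≫ kX = kN)
    (hnng : Θ.act nng νX (𝟙 X) = Θ.act (𝟙 KN) νN ng)
    (nmg : KX ⟶ KY) (hnmg₀ : nmg ≫ kY = kX)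
    (hnmg : Θ.act nmg νY (𝟙 Y) = Θ.act (𝟙 KX) νX g)
    (Δ : KY ⟶ Ng) (hΔ₀ : Δ ≫ ng = ζ.zero KY X) (hΔ : Θ.act Δ νg (𝟙 Y) = νY)
    (cng : CN ⟶ CX) (hcng₀ : cN ≫ cng = cX)
    (hcng : Θ.act (𝟙 Ng) γN cng = Θ.act ng γX (𝟙 CX))
    (png : PN ⟶ PX) (hpng₀ : png ≫ pX = pN)
    (hpng : Θ.act png μX (𝟙 CX) = Θ.act (𝟙 PN) μN cng)
    (cg : CX ⟶ CY) (hcg₀ : cX ≫ cg = cY)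
    (hcg : Θ.act (𝟙 X) γX cg = Θ.act g γY (𝟙 CY))
    (pg : PX ⟶ PY) (hpg₀ : pg ≫ pY = pX)
    (hpg : Θ.act pg μY (𝟙 CY) = Θ.act (𝟙 PX) μX cg) :
    nng ≫ nmg = ζ.zero KN KY ∧
    nmg ≫ Δ ≫ ηN = ζ.zero KX PN ∧
    (Δ ≫ ηN) ≫ png = ζ.zero KY PX ∧
    png ≫ pg = ζ.zero PN PY :=
  snail_sequence_composites_zero_general Θ hRI ζ g ng νg hg kN νN hkN kX νX hkX kY νY hkY cN γN hcN
    pN μN hpN ηN hηN cX γX pX μX hpX cY γY hcY pY μY hpY nng hnng nmg hnmg Δ hΔ₀ hΔ cng hcng png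
    hpng cg hcg pg hpg
end
end

section
/- Let A be an abelian category and f• : h• → h'• a morphism of isosequentiable families in A. For each n, let P_n be the pullback of f̲_n : Cod(h_n) → Cod(h'_n) along h'_n : Dom(h'_n) → Cod(h'_n), let h^P_n = ⟨h_n, f̄_n⟩ : Dom(h_n) → P_n, let π_n : P_n → Cod(h_n) be the pullback projection, let C(π)_n : Cok(h^P_n) → Cok(h_n) be the arrow induced on cokernels, let K(f)_n : Ker(h_n) → Ker(h'_n) be the arrow induced on kernels, and let δ_n : Ker(h'_n) → Cok(h^P_n) be the composite of ⟨0, k'_n⟩ : Ker(h'_n) → P_n (where k'_n : Ker(h'_n) → Dom(h'_n)) with the cokernel projection of h^P_n. Then the three-periodic long sequence ... → Cok(h^P_{n+1}) →^{C(π)_{n+1}} Cok(h_{n+1}) →^{i_n·K(f)_n} Ker(h'_n) →^{δ_n} Cok(h^P_n) →^{C(π)_n} Cok(h_n) → ... is exact at every term. -/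
open CategoryTheory CategoryTheory.Limits

noncomputable section

universe v u

variable (A : Type u) [Category.{v} A] [HasZeroMorphisms A] [HasKernels A] [HasCokernels A]

/-- A sequentiable family of arrows in `A`: arrows `h n : Dom n ⟶ Cod n` (for `n : ℤ`)
together with connecting arrows `i n : Cok(h (n+1)) ⟶ Ker(h n)`. -/
structure SeqFam where
  Dom : ℤ → A
  Cod : ℤ → A
  h : ∀ n : ℤ, Dom n ⟶ Cod n
  i : ∀ n : ℤ, cokernel (h (n + 1)) ⟶ kernel (h n)

variable {A}

/-- A morphism of sequentiable families. -/
@[ext]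
structure SeqHom (F G : SeqFam A) where
  fDom : ∀ n : ℤ, F.Dom n ⟶ G.Dom n
  fCod : ∀ n : ℤ, F.Cod n ⟶ G.Cod n
  comm : ∀ n : ℤ, F.h n ≫ fCod n = fDom n ≫ G.h n
  compat : ∀ n : ℤ,
    cokernel.map (F.h (n+1)) (G.h (n+1)) (fDom (n+1)) (fCod (n+1)) (comm (n+1)) ≫ G.i n
      = F.i n ≫ kernel.map (F.h n) (G.h n) (fDom n) (fCod n) (comm n)

section Defs
variable [HasPullbacks A] {F G : SeqFam A}

/-- The pullback `P n` of `f̲ n` along `h' n`. -/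
def pObj (f : SeqHom F G) (n : ℤ) : A := pullback (f.fCod n) (G.h n)

/-- The comparison `h^P n = ⟨h n, f̄ n⟩ : Dom(h n) ⟶ P n`. -/
def hP (f : SeqHom F G) (n : ℤ) : F.Dom n ⟶ pObj f n :=
  pullback.lift (F.h n) (f.fDom n) (f.comm n)

/-- `C(π) n : Cok(h^P n) ⟶ Cok(h n)`, induced by the pullback projection `π n`. -/
def Cpi (f : SeqHom F G) (n : ℤ) : cokernel (hP f n) ⟶ cokernel (F.h n) :=
  cokernel.map (hP f n) (F.h n) (𝟙 _) (pullback.fst (f.fCod n) (G.h n)) (by rw [Category.id_comp]; exact pullback.lift_fst _ _ _)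

/-- `K(f) n : Ker(h n) ⟶ Ker(h' n)`, induced by `f`. -/
def Kf (f : SeqHom F G) (n : ℤ) : kernel (F.h n) ⟶ kernel (G.h n) :=
  kernel.map (F.h n) (G.h n) (f.fDom n) (f.fCod n) (f.comm n)

/-- `δ n = ⟨0, k' n⟩ ≫ (cokernel projection of h^P n) : Ker(h' n) ⟶ Cok(h^P n)`. -/
def del (f : SeqHom F G) (n : ℤ) : kernel (G.h n) ⟶ cokernel (hP f n) :=
  pullback.lift 0 (kernel.ι (G.h n)) (by simp) ≫ cokernel.π (hP f n)

end Defs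

/-!
A commutative square `f ≫ β = α ≫ g` with `P` the pullback of `β` and `g` yields the exact
sequence `Ker f → Ker g → Cok ⟨f, α⟩ → Cok f → Cok g`: here `Ker g` is the kernel of the
projection `P → Cod f`; this identification drives the exactness at `Cok ⟨f, α⟩`.
Applied to the squares of `f•`, the invertible connecting arrows `i n` splice these sequences
into the three-periodic one.
-/

open Category

namespace CategoryTheory.ShortComplex

variable {C : Type*} [Category C] [Preadditive C] {S : ShortComplex C}

lemma Exact.epi_comp (hS : S.Exact) {Z : C} (e : Z ⟶ S.X₁) [Epi e] :
    (ShortComplex.mk (e ≫ S.f) S.g (by rw [assoc, S.zero, comp_zero])).Exact :=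
  (exact_iff_of_epi_of_isIso_of_mono (S₁ := .mk (e ≫ S.f) S.g _) (S₂ := S)
    { τ₁ := e, τ₂ := 𝟙 _, τ₃ := 𝟙 _ }).2 hS

lemma Exact.comp_mono (hS : S.Exact) {Z : C} (m : S.X₃ ⟶ Z) [Mono m] {g : S.X₂ ⟶ Z}
    (hg : S.g ≫ m = g) :
    (ShortComplex.mk S.f g (by rw [← hg, ← assoc, S.zero, zero_comp])).Exact :=
  (exact_iff_of_epi_of_isIso_of_mono (S₁ := S) (S₂ := .mk S.f g _)
    { τ₁ := 𝟙 _, τ₂ := 𝟙 _, τ₃ := m }).1 hS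

end CategoryTheory.ShortComplex

section KernelToPullback

variable {C : Type*} [Category C] [HasZeroMorphisms C] [HasKernels C] [HasPullbacks C]
  {X' Y Y' : C} (β : Y ⟶ Y') (g : X' ⟶ Y')

def kernelToPullback : kernel g ⟶ pullback β g :=
  pullback.lift 0 (kernel.ι g) (by simp)

@[simp]
lemma kernelToPullback_fst : kernelToPullback β g ≫ pullback.fst β g = 0 :=
  pullback.lift_fst _ _ _

@[simp]
lemma kernelToPullback_snd : kernelToPullback β g ≫ pullback.snd β g = kernel.ι g :=
  pullback.lift_snd _ _ _

end KernelToPullback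

section Abelian

open ShortComplex

variable {C : Type*} [Category C] [Abelian C]

lemma exact_kernelToPullback_fst {X' Y Y' : C} (β : Y ⟶ Y') (g : X' ⟶ Y') :
    (ShortComplex.mk _ _ (kernelToPullback_fst β g)).Exact := by
  rw [exact_iff_exact_up_to_refinements]
  intro A x hx
  dsimp at hx
  refine ⟨A, 𝟙 A, inferInstance, kernel.lift g (x ≫ pullback.snd β g) ?_, ?_⟩
  · rw [assoc, ← pullback.condition, reassoc_of% hx, zero_comp]
  · apply pullback.hom_ext <;> simp [hx]

lemma exact_comp_cokernelπ_cokernelMap {K P X Y : C} {k : K ⟶ P} {v : P ⟶ Y}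
    {hkv : k ≫ v = 0} (hk : (ShortComplex.mk k v hkv).Exact) (u : X ⟶ P) {w : X ⟶ Y}
    (huv : u ≫ v = w) :
    (ShortComplex.mk (k ≫ cokernel.π u) (cokernel.map u w (𝟙 X) v (by rw [id_comp, huv]))
      (by simp [reassoc_of% hkv])).Exact := by
  rw [exact_iff_exact_up_to_refinements]
  intro A x hx
  obtain ⟨A₁, π₁, _, p, hp⟩ := surjective_up_to_refinements_of_epi (cokernel.π u) x
  obtain ⟨A₂, π₂, _, a, ha⟩ := (exact_cokernel w).exact_up_to_refinements (p ≫ v) (by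
    simpa [reassoc_of% hp] using π₁ ≫= hx)
  obtain ⟨A₃, π₃, _, y, hy⟩ := hk.exact_up_to_refinements (π₂ ≫ p - a ≫ u) (by
    simpa [Preadditive.sub_comp, huv, sub_eq_zero] using ha)
  refine ⟨A₃, π₃ ≫ π₂ ≫ π₁, inferInstance, y, ?_⟩
  simpa [hp, Preadditive.sub_comp] using hy =≫ cokernel.π u

variable {X Y X' Y' : C} {f : X ⟶ Y} {g : X' ⟶ Y'} {α : X ⟶ X'} {β : Y ⟶ Y'}

lemma kernelMap_comp_kernelToPullback (w : f ≫ β = α ≫ g) :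
    kernel.map f g α β w ≫ kernelToPullback β g = kernel.ι f ≫ pullback.lift f α w := by
  apply pullback.hom_ext <;> simp [pullback.lift_fst, pullback.lift_snd]

lemma exact_cokernelMap_pullbackFst_cokernelMap (w : f ≫ β = α ≫ g) :
    (ShortComplex.mk
      (cokernel.map (pullback.lift f α w) f (𝟙 X) (pullback.fst β g)
        (by simp [pullback.lift_fst]))
      (cokernel.map f g α β w) (by ext; simp [pullback.condition_assoc])).Exact := by
  rw [exact_iff_exact_up_to_refinements]
  intro A x hx
  obtain ⟨A₁, π₁, _, c, hc⟩ := surjective_up_to_refinements_of_epi (cokernel.π f) x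
  obtain ⟨A₂, π₂, _, d, hd⟩ := (exact_cokernel g).exact_up_to_refinements (c ≫ β) (by
    simpa [reassoc_of% hc] using π₁ ≫= hx)
  refine ⟨A₂, π₂ ≫ π₁, inferInstance,
    pullback.lift (π₂ ≫ c) d (by simpa using hd) ≫ cokernel.π _, ?_⟩
  simp [hc, pullback.lift_fst_assoc]

lemma exact_kernelMap_kernelToPullback_comp_π (w : f ≫ β = α ≫ g) :
    (ShortComplex.mk (kernel.map f g α β w)
      (kernelToPullback β g ≫ cokernel.π (pullback.lift f α w))
      (by rw [← assoc, kernelMap_comp_kernelToPullback, assoc, cokernel.condition,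
        comp_zero])).Exact := by
  rw [exact_iff_exact_up_to_refinements]
  intro A x hx
  obtain ⟨A₁, π₁, _, a, ha⟩ :=
    (exact_cokernel (pullback.lift f α w)).exact_up_to_refinements
      (x ≫ kernelToPullback β g) (by simpa using hx)
  refine ⟨A₁, π₁, inferInstance,
    kernel.lift f a (by simpa [pullback.lift_fst] using ha.symm =≫ pullback.fst β g), ?_⟩
  ext
  simpa [pullback.lift_snd] using ha =≫ pullback.snd β g

lemma exact_kernelToPullback_comp_π_cokernelMap (w : f ≫ β = α ≫ g) :
    (ShortComplex.mk (kernelToPullback β g ≫ cokernel.π (pullback.lift f α w))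
      (cokernel.map (pullback.lift f α w) f (𝟙 X) (pullback.fst β g)
        (by simp [pullback.lift_fst]))
      (by simp [reassoc_of% kernelToPullback_fst β g])).Exact :=
  exact_comp_cokernelπ_cokernelMap (exact_kernelToPullback_fst β g) _ (pullback.lift_fst _ _ _)

end Abelian

/-- **Statement 9** (The three-periodic long sequence associated with a morphism of
isosequentiable families in an abelian category is exact at every term). -/
theorem seq_long_sequence_exact
    (A : Type u) [Category.{v} A] [Abelian A]
    (F G : SeqFam A) (f : SeqHom F G)
    (hFiso : ∀ n : ℤ, IsIso (F.i n)) (hGiso : ∀ n : ℤ, IsIso (G.i n)) :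
    ∀ n : ℤ,
      (∃ w : Cpi f (n+1) ≫ (F.i n ≫ Kf f n) = 0, (ShortComplex.mk _ _ w).Exact) ∧
      (∃ w : (F.i n ≫ Kf f n) ≫ del f n = 0, (ShortComplex.mk _ _ w).Exact) ∧
      (∃ w : del f n ≫ Cpi f n = 0, (ShortComplex.mk _ _ w).Exact) := by
  intro n
  have := hFiso n
  have := hGiso n
  exact ⟨⟨_, (exact_cokernelMap_pullbackFst_cokernelMap (f.comm (n + 1))).comp_mono (G.i n)
      (f.compat n)⟩,
    ⟨_, (exact_kernelMap_kernelToPullback_comp_π (f.comm n)).epi_comp (F.i n)⟩,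
    ⟨_, exact_kernelToPullback_comp_π_cokernelMap (f.comm n)⟩⟩
end
end

section
/- Let A be a pointed regular category with kernels and cokernels (i.e., A has finite limits, every morphism factors as a regular epimorphism followed by a monomorphism, and regular epimorphisms are stable under pullback). Given composable arrows A →^f B →^g C →^h D, if the composite f·g·h is proper, f is an epimorphism, and h is a monomorphism, then g is proper. -/
open CategoryTheory CategoryTheory.Limits

noncomputable section

universe v u

variable {A : Type u} [Category.{v} A] [HasZeroMorphisms A] [HasKernels A] [HasCokernels A]

/-- The canonical factorization of an arrow through the kernel of its cokernel. -/
def properFact {X Y : A} (u : X ⟶ Y) : X ⟶ kernel (cokernel.π u) :=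
  kernel.lift (cokernel.π u) u (cokernel.condition u)

/-- An arrow is proper if its canonical factorization through the kernel of its
cokernel is a regular epimorphism. -/
def IsProper {X Y : A} (u : X ⟶ Y) : Prop :=
  Nonempty (RegularEpi (properFact u))

/-! Since `f` is epi, the cokernel of `f ≫ g ≫ h` kills `g ≫ h`, so the canonical
factorization of `f ≫ g ≫ h` splits as `f ≫ properFact g ≫ l`, where
`l : ker (coker g) ⟶ ker (coker (f ≫ g ≫ h))` is a mono because `h` is. A mono that is the
second factor of a regular (hence strong) epi is an iso, so `f ≫ properFact g` is a regular epi.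
Then `properFact g` is a strong epi, and strong epis are regular once every arrow factors as a
regular epi followed by a mono. -/

section RegularEpi

variable {C : Type*} [Category C]

lemma isRegularEpi_of_comp_of_mono {X Y Z : C} (a : X ⟶ Y) (b : Y ⟶ Z)
    [IsRegularEpi (a ≫ b)] [Mono b] : IsRegularEpi a := by
  have := strongEpi_of_strongEpi a b
  have := isIso_of_mono_of_strongEpi b
  simpa using
    MorphismProperty.RespectsIso.postcomp (MorphismProperty.regularEpi C) (inv b) (a ≫ b) ‹_›

lemma isRegularEpi_of_strongEpi
    (hfact : ∀ {X Y : C} (f : X ⟶ Y), ∃ (I : C) (e : X ⟶ I) (m : I ⟶ Y),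
        Nonempty (RegularEpi e) ∧ Mono m ∧ e ≫ m = f)
    {X Y : C} (w : X ⟶ Y) [StrongEpi w] : IsRegularEpi w := by
  obtain ⟨I, e, m, ⟨he⟩, hm, rfl⟩ := hfact w
  have := isRegularEpi_of_regularEpi he
  have := strongEpi_of_strongEpi e m
  have := isIso_of_mono_of_strongEpi m
  exact MorphismProperty.RespectsIso.postcomp (MorphismProperty.regularEpi C) m e ‹_›

end RegularEpi

lemma isProper_iff {X Y : A} (u : X ⟶ Y) : IsProper u ↔ IsRegularEpi (properFact u) :=
  ⟨fun h => ⟨h⟩, fun h => h.regularEpi⟩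

lemma kernel_ι_cokernel_π_comp_eq_zero {X Y Q : A} {g : X ⟶ Y} {c : Y ⟶ Q}
    (hc : g ≫ c = 0) : kernel.ι (cokernel.π g) ≫ c = 0 := by
  rw [← cokernel.π_desc g c hc, kernel.condition_assoc, zero_comp]

lemma exists_mono_properFact_epi_comp_comp_mono {W X Y Z : A} (f : W ⟶ X) (g : X ⟶ Y)
    (h : Y ⟶ Z) [Epi f] [Mono h] :
    ∃ l : kernel (cokernel.π g) ⟶ kernel (cokernel.π (f ≫ g ≫ h)),
      Mono l ∧ properFact (f ≫ g ≫ h) = f ≫ properFact g ≫ l := by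
  have hgh : g ≫ h ≫ cokernel.π (f ≫ g ≫ h) = 0 := by
    rw [← cancel_epi f, comp_zero]
    simpa only [Category.assoc] using cokernel.condition (f ≫ g ≫ h)
  let l := kernel.lift _ (kernel.ι (cokernel.π g) ≫ h)
    (by rw [Category.assoc, kernel_ι_cokernel_π_comp_eq_zero hgh])
  refine ⟨l, mono_of_mono_fac (kernel.lift_ι _ _ _), ?_⟩
  rw [← cancel_mono (kernel.ι _)]
  simp [l, properFact]

theorem proper_of_epi_comp_mono_general
    (A : Type u) [Category.{v} A] [HasZeroMorphisms A]
    [HasKernels A] [HasCokernels A]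
    (hfact : ∀ {X Y : A} (f : X ⟶ Y), ∃ (I : A) (e : X ⟶ I) (m : I ⟶ Y),
        Nonempty (RegularEpi e) ∧ Mono m ∧ e ≫ m = f)
    {W X Y Z : A} (f : W ⟶ X) (g : X ⟶ Y) (h : Y ⟶ Z)
    (hp : IsProper (f ≫ g ≫ h)) (hf : Epi f) (hm : Mono h) :
    IsProper g := by
  rw [isProper_iff] at hp ⊢
  obtain ⟨l, hl, hfactor⟩ := exists_mono_properFact_epi_comp_comp_mono f g h
  replace hp : IsRegularEpi ((f ≫ properFact g) ≫ l) := by rwa [Category.assoc, ← hfactor]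
  have := isRegularEpi_of_comp_of_mono (f ≫ properFact g) l
  have := strongEpi_of_strongEpi f (properFact g)
  exact isRegularEpi_of_strongEpi hfact (properFact g)

/-- **Statement 12** (Lemma: properness from a sandwiched composite).
Let `A` be a pointed regular category with kernels and cokernels (finite limits,
(regular epi, mono) factorizations, regular epis stable under pullback).  Given
composable arrows `f, g, h`, if `f ≫ g ≫ h` is proper, `f` is an epimorphism and `h` is
a monomorphism, then `g` is proper. -/
theorem proper_of_epi_comp_mono
    (A : Type u) [Category.{v} A] [HasZeroObject A] [HasZeroMorphisms A]
    [HasFiniteLimits A] [HasKernels A] [HasCokernels A]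
    (hfact : ∀ {X Y : A} (f : X ⟶ Y), ∃ (I : A) (e : X ⟶ I) (m : I ⟶ Y),
        Nonempty (RegularEpi e) ∧ Mono m ∧ e ≫ m = f)
    (hstab : ∀ {P X Y Z : A} (fst : P ⟶ X) (snd : P ⟶ Y) (u : X ⟶ Z) (v : Y ⟶ Z),
        IsPullback fst snd u v → Nonempty (RegularEpi v) → Nonempty (RegularEpi fst))
    {W X Y Z : A} (f : W ⟶ X) (g : X ⟶ Y) (h : Y ⟶ Z)
    (hp : IsProper (f ≫ g ≫ h)) (hf : Epi f) (hm : Mono h) :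
    IsProper g :=
  proper_of_epi_comp_mono_general A hfact f g h hp hf hm
end
end

section
/- Let A be a preadditive category with a zero object. If the nullhomotopy structure Θ_Ch on the category Ch(A) of chain complexes satisfies the reduced interchange condition (i.e., for all composable chain maps f•, g• and all nullhomotopies α• ∈ Θ_Ch(f•), β• ∈ Θ_Ch(g•) one has α• ∘ g• = f• ∘ β•), then every chain map admitting a chain nullhomotopy is the zero map. Consequently, if A admits a nonzero null-homotopic chain map, Θ_Ch does not satisfy reduced interchange. -/
open CategoryTheory CategoryTheory.Limits

noncomputable section

universe v u

variable {A : Type u} [Category.{v} A] [Preadditive A]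

/-- `φ` is a chain nullhomotopy for the chain map `g`, i.e.
`φ_n ≫ d^C_{n+1} + d^B_n ≫ φ_{n-1} = g_n` for all `n`. -/
def IsChainNullhomotopy {B C : ChainComplex A ℤ} (g : B ⟶ C)
    (φ : ∀ n : ℤ, B.X n ⟶ C.X (n+1)) : Prop :=
  ∀ n : ℤ, φ (n+1) ≫ C.d (n+1+1) (n+1) + B.d (n+1) n ≫ φ n = g.f (n+1)

variable (A) in
/-- The reduced interchange condition for the nullhomotopy structure `Θ_Ch` on `Ch(A)`:
for composable chain maps `f, g` and chain nullhomotopies `α` of `f` and `β` of `g`, one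
has `α ∘ g = f ∘ β` (componentwise). -/
def ChainReducedInterchange : Prop :=
  ∀ {A' B C : ChainComplex A ℤ} (f : A' ⟶ B) (g : B ⟶ C)
    (α : ∀ n : ℤ, A'.X n ⟶ B.X (n+1)) (β : ∀ n : ℤ, B.X n ⟶ C.X (n+1)),
    IsChainNullhomotopy f α → IsChainNullhomotopy g β →
    ∀ n : ℤ, α n ≫ g.f (n+1) = f.f n ≫ β n

/-- The sign on `d` makes `𝟙` a nullhomotopy of `0 : shiftOne B ⟶ B`; reduced interchange
applied to it and to a nullhomotopy `φ` of `g : B ⟶ C` gives `g = 𝟙 ≫ g = 0 ≫ φ = 0`. -/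
def shiftOne (B : ChainComplex A ℤ) : ChainComplex A ℤ where
  X n := B.X (n+1)
  d i j := -B.d (i+1) (j+1)
  shape i j h := by
    rw [B.shape, neg_zero]
    simp only [ComplexShape.down_Rel] at h ⊢
    omega
  d_comp_d' i j k _ _ := by simp

theorem isChainNullhomotopy_zero_shiftOne (B : ChainComplex A ℤ) :
    IsChainNullhomotopy (0 : shiftOne B ⟶ B) (fun n => 𝟙 (B.X (n+1))) := by
  intro n
  change 𝟙 _ ≫ B.d (n+1+1) (n+1) + (-B.d (n+1+1) (n+1)) ≫ 𝟙 _ = 0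
  simp

theorem ChainReducedInterchange.eq_zero_of_isChainNullhomotopy (h : ChainReducedInterchange A)
    {B C : ChainComplex A ℤ} (g : B ⟶ C) (φ : ∀ n : ℤ, B.X n ⟶ C.X (n+1))
    (hφ : IsChainNullhomotopy g φ) : g = 0 := by
  ext n
  obtain ⟨m, rfl⟩ : ∃ m, n = m + 1 := ⟨n - 1, by omega⟩
  have interchange := h 0 g _ φ (isChainNullhomotopy_zero_shiftOne B) hφ m
  rw [HomologicalComplex.zero_f, zero_comp] at interchange
  rw [HomologicalComplex.zero_f]
  exact (Category.id_comp _).symm.trans interchange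

theorem chain_reduced_interchange_forces_zero_general
    (A : Type u) [Category.{v} A] [Preadditive A] :
    (ChainReducedInterchange A →
      ∀ {B C : ChainComplex A ℤ} (g : B ⟶ C) (φ : ∀ n : ℤ, B.X n ⟶ C.X (n+1)),
        IsChainNullhomotopy g φ → g = 0) ∧
    ((∃ (B C : ChainComplex A ℤ) (g : B ⟶ C) (φ : ∀ n : ℤ, B.X n ⟶ C.X (n+1)),
        IsChainNullhomotopy g φ ∧ g ≠ 0) → ¬ ChainReducedInterchange A) :=
  ⟨fun h _ _ g φ hφ => h.eq_zero_of_isChainNullhomotopy g φ hφ,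
    fun ⟨_, _, g, φ, hφ, hg⟩ h => hg (h.eq_zero_of_isChainNullhomotopy g φ hφ)⟩

/-- **Statement 17** (`Θ_Ch` does not satisfy the reduced interchange condition, unless
all null-homotopic chain maps vanish).  If the nullhomotopy structure `Θ_Ch` on `Ch(A)`
satisfies the reduced interchange condition, then every chain map admitting a chain
nullhomotopy is zero; consequently, if `A` admits a nonzero null-homotopic chain map,
then `Θ_Ch` does not satisfy the reduced interchange condition. -/
theorem chain_reduced_interchange_forces_zero
    (A : Type u) [Category.{v} A] [Preadditive A] [HasZeroObject A] :
    (ChainReducedInterchange A →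
      ∀ {B C : ChainComplex A ℤ} (g : B ⟶ C) (φ : ∀ n : ℤ, B.X n ⟶ C.X (n+1)),
        IsChainNullhomotopy g φ → g = 0) ∧
    ((∃ (B C : ChainComplex A ℤ) (g : B ⟶ C) (φ : ∀ n : ℤ, B.X n ⟶ C.X (n+1)),
        IsChainNullhomotopy g φ ∧ g ≠ 0) → ¬ ChainReducedInterchange A) :=
  chain_reduced_interchange_forces_zero_general A
end
end

section
/- (Snail lemma in an abelian category.) Let A be an abelian category. Given arrows x : X → X₀, y : Y → Y₀, g : X → Y, g₀ : X₀ → Y₀ with g·y = x·g₀, let P = X₀ ×_{g₀,y} Y be the pullback of g₀ and y, with projections y' : P → X₀ and g₀' : P → Y, and let ⟨x,g⟩ : X → P be the induced arrow. Then the snail sequence Ker⟨x,g⟩ → Ker(x) → Ker(y) →^{δ₀} Cok⟨x,g⟩ → Cok(x) → Cok(y), where the first arrow is induced by id_X over y', the second by g, δ₀ = ⟨0, k_y⟩·c_{⟨x,g⟩} (with k_y : Ker(y) → Y the kernel arrow and c_{⟨x,g⟩} the cokernel projection of ⟨x,g⟩), the fourth arrow is induced by y' : P → X₀, and the fifth by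 g₀, is exact at Ker(x), at Ker(y), at Cok⟨x,g⟩, and at Cok(x). -/
/-! Exactness is checked by a diagram chase up to refinements: a morphism `T ⟶ Z` stands for an
element of `Z`, and picking a preimage under an epimorphism costs passing to an epimorphic cover
`T' ⟶ T`. Besides the universal properties of kernels and cokernels, the chase uses two facts about
`P = X₀ ×_{g₀,y} Y`: a morphism into `P` is determined by its two projections, and one killed by
`y'` factors through `⟨0, k_y⟩ : Ker(y) ⟶ P`. -/

open CategoryTheory CategoryTheory.Limits

noncomputable section

universe v u

variable {A : Type u} [Category.{v} A] [Abelian A]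
variable {X X₀ Y Y₀ : A}

/-- The comparison `⟨x, g⟩ : X ⟶ X₀ ×_{g₀,y} Y` into the pullback of `g₀` and `y`. -/
def snailLift (x : X ⟶ X₀) (y : Y ⟶ Y₀) (g : X ⟶ Y) (g₀ : X₀ ⟶ Y₀)
    (sq : g ≫ y = x ≫ g₀) : X ⟶ pullback g₀ y :=
  pullback.lift x g sq.symm

/-- `Ker⟨x,g⟩ ⟶ Ker(x)`, induced by `id_X` over the pullback projection `y'`. -/
def snailK1 (x : X ⟶ X₀) (y : Y ⟶ Y₀) (g : X ⟶ Y) (g₀ : X₀ ⟶ Y₀)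
    (sq : g ≫ y = x ≫ g₀) : kernel (snailLift x y g g₀ sq) ⟶ kernel x :=
  kernel.map (snailLift x y g g₀ sq) x (𝟙 X) (pullback.fst g₀ y) (by simp [snailLift]; exact pullback.lift_fst _ _ _)

/-- `Ker(x) ⟶ Ker(y)`, induced by `g` over `g₀`. -/
def snailK2 (x : X ⟶ X₀) (y : Y ⟶ Y₀) (g : X ⟶ Y) (g₀ : X₀ ⟶ Y₀)
    (sq : g ≫ y = x ≫ g₀) : kernel x ⟶ kernel y :=
  kernel.map x y g g₀ sq.symm

/-- The connecting arrow `δ₀ = ⟨0, k_y⟩ ≫ c_{⟨x,g⟩} : Ker(y) ⟶ Cok⟨x,g⟩`. -/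
def snailDelta (x : X ⟶ X₀) (y : Y ⟶ Y₀) (g : X ⟶ Y) (g₀ : X₀ ⟶ Y₀)
    (sq : g ≫ y = x ≫ g₀) : kernel y ⟶ cokernel (snailLift x y g g₀ sq) :=
  pullback.lift 0 (kernel.ι y) (by simp) ≫ cokernel.π (snailLift x y g g₀ sq)

/-- `Cok⟨x,g⟩ ⟶ Cok(x)`, induced by the pullback projection `y'`. -/
def snailC1 (x : X ⟶ X₀) (y : Y ⟶ Y₀) (g : X ⟶ Y) (g₀ : X₀ ⟶ Y₀)
    (sq : g ≫ y = x ≫ g₀) : cokernel (snailLift x y g g₀ sq) ⟶ cokernel x :=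
  cokernel.map (snailLift x y g g₀ sq) x (𝟙 X) (pullback.fst g₀ y) (by simp [snailLift]; exact pullback.lift_fst _ _ _)

/-- `Cok(x) ⟶ Cok(y)`, induced by `g` over `g₀`. -/
def snailC2 (x : X ⟶ X₀) (y : Y ⟶ Y₀) (g : X ⟶ Y) (g₀ : X₀ ⟶ Y₀)
    (sq : g ≫ y = x ≫ g₀) : cokernel x ⟶ cokernel y :=
  cokernel.map x y g g₀ sq.symm

theorem exists_lift_of_comp_pullback_fst_eq_zero {C : Type*} [Category C] [HasZeroMorphisms C]
    {P Q R T : C} {f : P ⟶ R} {h : Q ⟶ R} [HasPullback f h] [HasKernel h]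
    (q : T ⟶ pullback f h) (hq : q ≫ pullback.fst f h = 0) :
    ∃ k : T ⟶ kernel h, k ≫ pullback.lift 0 (kernel.ι h) (by simp) = q := by
  refine ⟨kernel.lift h (q ≫ pullback.snd f h) ?_, ?_⟩
  · rw [Category.assoc, ← pullback.condition, reassoc_of% hq, zero_comp]
  · apply pullback.hom_ext <;> simp [pullback.lift_fst, pullback.lift_snd, hq]

section Snail

variable (x : X ⟶ X₀) (y : Y ⟶ Y₀) (g : X ⟶ Y) (g₀ : X₀ ⟶ Y₀) (sq : g ≫ y = x ≫ g₀)

theorem snailLift_fst : snailLift x y g g₀ sq ≫ pullback.fst g₀ y = x :=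
  pullback.lift_fst _ _ _

theorem snailLift_snd : snailLift x y g g₀ sq ≫ pullback.snd g₀ y = g :=
  pullback.lift_snd _ _ _

theorem snailK1_ι : snailK1 x y g g₀ sq ≫ kernel.ι x = kernel.ι (snailLift x y g g₀ sq) := by
  simp [snailK1]

theorem snailK2_ι : snailK2 x y g g₀ sq ≫ kernel.ι y = kernel.ι x ≫ g := by
  simp [snailK2]

theorem π_snailC1 :
    cokernel.π (snailLift x y g g₀ sq) ≫ snailC1 x y g g₀ sq =
      pullback.fst g₀ y ≫ cokernel.π x := by
  simp [snailC1]

theorem π_snailC2 : cokernel.π x ≫ snailC2 x y g g₀ sq = g₀ ≫ cokernel.π y := by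
  simp [snailC2]

theorem snailK2_comp_pullback_lift_zero :
    snailK2 x y g g₀ sq ≫ pullback.lift 0 (kernel.ι y) (by simp) =
      kernel.ι x ≫ snailLift x y g g₀ sq := by
  apply pullback.hom_ext <;>
    simp [pullback.lift_fst, pullback.lift_snd, snailLift_fst, snailLift_snd, snailK2_ι]

theorem snailK1_comp_snailK2 : snailK1 x y g g₀ sq ≫ snailK2 x y g g₀ sq = 0 := by
  have h : kernel.ι (snailLift x y g g₀ sq) ≫ g = 0 := by
    simpa [snailLift_snd] using kernel.condition_assoc (snailLift x y g g₀ sq) (pullback.snd g₀ y)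
  rw [← cancel_mono (kernel.ι y), Category.assoc, snailK2_ι, reassoc_of% snailK1_ι, h, zero_comp]

theorem snailK2_comp_snailDelta : snailK2 x y g g₀ sq ≫ snailDelta x y g g₀ sq = 0 := by
  rw [snailDelta, reassoc_of% snailK2_comp_pullback_lift_zero, cokernel.condition, comp_zero]

theorem snailDelta_comp_snailC1 : snailDelta x y g g₀ sq ≫ snailC1 x y g g₀ sq = 0 := by
  rw [snailDelta, Category.assoc, π_snailC1, pullback.lift_fst_assoc, zero_comp]

theorem snailC1_comp_snailC2 : snailC1 x y g g₀ sq ≫ snailC2 x y g g₀ sq = 0 := by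
  rw [← cancel_epi (cokernel.π (snailLift x y g g₀ sq)), reassoc_of% π_snailC1, π_snailC2,
    reassoc_of% pullback.condition, cokernel.condition, comp_zero, comp_zero]

theorem snailK1_snailK2_exact : (ShortComplex.mk _ _ (snailK1_comp_snailK2 x y g g₀ sq)).Exact := by
  rw [ShortComplex.exact_iff_exact_up_to_refinements]
  intro T a ha
  have hg : a ≫ kernel.ι x ≫ g = 0 := by
    simpa [snailK2_ι] using ha =≫ kernel.ι y
  have hL : (a ≫ kernel.ι x) ≫ snailLift x y g g₀ sq = 0 := by
    apply pullback.hom_ext <;> simp [snailLift_fst, snailLift_snd, hg]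
  refine ⟨T, 𝟙 T, inferInstance, kernel.lift _ _ hL, ?_⟩
  rw [← cancel_mono (kernel.ι x)]
  simp [snailK1_ι]

theorem snailK2_snailDelta_exact :
    (ShortComplex.mk _ _ (snailK2_comp_snailDelta x y g g₀ sq)).Exact := by
  rw [ShortComplex.exact_iff_exact_up_to_refinements]
  intro T b hb
  obtain ⟨T', π, hπ, a, hab⟩ :=
    (ShortComplex.exact_cokernel (snailLift x y g g₀ sq)).exact_up_to_refinements
      (b ≫ pullback.lift 0 (kernel.ι y) (by simp)) (by simpa [snailDelta] using hb)
  have hax : a ≫ x = 0 := by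
    simpa [pullback.lift_fst, snailLift_fst] using (hab =≫ pullback.fst g₀ y).symm
  refine ⟨T', π, hπ, kernel.lift x a hax, ?_⟩
  rw [← cancel_mono (kernel.ι y)]
  simpa [pullback.lift_snd, snailLift_snd, snailK2_ι] using hab =≫ pullback.snd g₀ y

theorem snailDelta_snailC1_exact :
    (ShortComplex.mk _ _ (snailDelta_comp_snailC1 x y g g₀ sq)).Exact := by
  rw [ShortComplex.exact_iff_exact_up_to_refinements]
  intro T c hc
  obtain ⟨T₁, π₁, hπ₁, p, hpc⟩ := surjective_up_to_refinements_of_epi (cokernel.π _) c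
  obtain ⟨T₂, π₂, hπ₂, a, hpa⟩ :=
    (ShortComplex.exact_cokernel x).exact_up_to_refinements (p ≫ pullback.fst g₀ y)
      (by rw [Category.assoc, ← π_snailC1 x y g g₀ sq, ← reassoc_of% hpc]; simp [hc])
  -- `π₂ ≫ p` and `a ≫ ⟨x,g⟩` agree in `X₀`, so their difference comes from `Ker(y)`.
  have hq : (π₂ ≫ p - a ≫ snailLift x y g g₀ sq) ≫ pullback.fst g₀ y = 0 := by
    simpa [snailLift_fst, sub_eq_zero] using hpa
  obtain ⟨k, hk⟩ := exists_lift_of_comp_pullback_fst_eq_zero _ hq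
  refine ⟨T₂, π₂ ≫ π₁, epi_comp _ _, k, ?_⟩
  dsimp
  rw [snailDelta, reassoc_of% hk]
  simp [hpc]

theorem snailC1_snailC2_exact :
    (ShortComplex.mk _ _ (snailC1_comp_snailC2 x y g g₀ sq)).Exact := by
  rw [ShortComplex.exact_iff_exact_up_to_refinements]
  intro T c hc
  obtain ⟨T₁, π₁, hπ₁, p, hpc⟩ := surjective_up_to_refinements_of_epi (cokernel.π x) c
  obtain ⟨T₂, π₂, hπ₂, q, hpq⟩ :=
    (ShortComplex.exact_cokernel y).exact_up_to_refinements (p ≫ g₀)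
      (by rw [Category.assoc, ← π_snailC2 x y g g₀ sq, ← reassoc_of% hpc]; simp [hc])
  refine ⟨T₂, π₂ ≫ π₁, epi_comp _ _,
    pullback.lift (π₂ ≫ p) q (by simpa using hpq) ≫ cokernel.π _, ?_⟩
  dsimp
  simp only [Category.assoc]
  rw [π_snailC1, pullback.lift_fst_assoc, Category.assoc, hpc]

end Snail

/-- **Statement 18** (The snail lemma in an abelian category).  Given a commutative square
`g ≫ y = x ≫ g₀`, the snail sequence
`Ker⟨x,g⟩ ⟶ Ker(x) ⟶ Ker(y) ⟶ Cok⟨x,g⟩ ⟶ Cok(x) ⟶ Cok(y)`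
is exact at `Ker(x)`, `Ker(y)`, `Cok⟨x,g⟩` and `Cok(x)`. -/
theorem snail_lemma_abelian
    (x : X ⟶ X₀) (y : Y ⟶ Y₀) (g : X ⟶ Y) (g₀ : X₀ ⟶ Y₀)
    (sq : g ≫ y = x ≫ g₀) :
    (∃ w : snailK1 x y g g₀ sq ≫ snailK2 x y g g₀ sq = 0, (ShortComplex.mk _ _ w).Exact) ∧
    (∃ w : snailK2 x y g g₀ sq ≫ snailDelta x y g g₀ sq = 0, (ShortComplex.mk _ _ w).Exact) ∧
    (∃ w : snailDelta x y g g₀ sq ≫ snailC1 x y g g₀ sq = 0, (ShortComplex.mk _ _ w).Exact) ∧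
    (∃ w : snailC1 x y g g₀ sq ≫ snailC2 x y g g₀ sq = 0, (ShortComplex.mk _ _ w).Exact) :=
  ⟨⟨_, snailK1_snailK2_exact x y g g₀ sq⟩, ⟨_, snailK2_snailDelta_exact x y g g₀ sq⟩,
    ⟨_, snailDelta_snailC1_exact x y g g₀ sq⟩, ⟨_, snailC1_snailC2_exact x y g g₀ sq⟩⟩
end
end
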